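/- Let r ∈ ℝ and let X be an n×n complex matrix with operator norm ‖X‖ < 1. Then the series Σ_{k=0}^∞ C(r,k) X^k converges absolutely in operator norm, where C(r,k) = r(r−1)⋯(r−k+1)/k! is the generalized binomial coefficient, and if additionally I + X is positive definite Hermitian, the sum equals (I+X)^r defined via the spectral functional calculus. -/

import Mathlib

open Matrix
open scoped Matrix.Norms.L2Operator ComplexOrder

/-- The generalized binomial coefficient `C(r,k) = r(r-1)⋯(r-k+1)/k!`. -/
noncomputable def genBinom (r : ℝ) (k : ℕ) : ℝ :=
  (∏ i ∈ Finset.range k, (r - i)) / (k.factorial : ℝ)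

/-- Real power of a matrix via the spectral functional calculus (junk value `0`
for non-Hermitian matrices). -/
noncomputable def matRpow {n : Type*} [Fintype n] [DecidableEq n]
    (r : ℝ) (A : Matrix n n ℂ) : Matrix n n ℂ :=
  if hA : A.IsHermitian then
    (hA.eigenvectorUnitary : Matrix n n ℂ) *
      Matrix.diagonal (fun i => ((hA.eigenvalues i ^ r : ℝ) : ℂ)) *
      (hA.eigenvectorUnitary : Matrix n n ℂ)ᴴ
  else 0

/-! The scalar identity `∑ C(r,k) t^k = (1 + t)^r` for `|t| < 1` is the power series expansion
of `(1 + t)^r`, whose radius of convergence is at least `1`; with `‖X^k‖ ≤ ‖X‖^k` this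
gives absolute convergence of the matrix series. For Hermitian `1 + X` each term `C(r,k) X^k` is
`cfc (fun t => C(r,k) (t - 1)^k) (1 + X)`, and the functional calculus of a Hermitian matrix is
conjugation of a diagonal matrix, so it commutes with sums converging on the spectrum. The
spectrum of `1 + X` lies in `(0, 2)` since `‖X‖ < 1`, where the scalar identity applies. -/

lemma genBinom_eq_choose (r : ℝ) (k : ℕ) : genBinom r k = Ring.choose r k := by
  rw [Ring.choose_eq_smul, ← Polynomial.aeval_eq_smeval, ← Polynomial.eval_map_algebraMap,
    descPochhammer_map, descPochhammer_eval_eq_prod_range, genBinom, smul_eq_mul, div_eq_inv_mul]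

lemma hasSum_genBinom_mul_pow (r : ℝ) {x : ℝ} (hx : |x| < 1) :
    HasSum (fun k => genBinom r k * x ^ k) ((1 + x) ^ r) := by
  have hmem : x ∈ Metric.eball (0 : ℝ) 1 := by simpa [Metric.mem_eball, edist_dist] using hx
  simpa only [binomialSeries, FormalMultilinearSeries.ofScalars_apply_eq, smul_eq_mul, zero_add,
    genBinom_eq_choose] using (Real.one_add_rpow_hasFPowerSeriesOnBall_zero (a := r)).hasSum hmem

lemma summable_abs_genBinom_mul_pow (r : ℝ) {a : ℝ} (ha₀ : 0 ≤ a) (ha₁ : a < 1) :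
    Summable fun k => |genBinom r k| * a ^ k := by
  have hlt : (a.toNNReal : ENNReal) < (binomialSeries ℝ r).radius :=
    lt_of_lt_of_le (by simpa using ha₁) binomialSeries_radius_ge_one
  simpa only [binomialSeries, FormalMultilinearSeries.ofScalars_norm, Real.norm_eq_abs,
    genBinom_eq_choose, Real.coe_toNNReal a ha₀] using
    (binomialSeries ℝ r).summable_norm_mul_pow hlt

lemma summable_norm_genBinom_smul_pow {𝔸 : Type*} [NormedRing 𝔸] [NormedAlgebra ℝ 𝔸] (r : ℝ)
    {x : 𝔸} (hx : ‖x‖ < 1) : Summable fun k => ‖genBinom r k • x ^ k‖ := by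
  refine .of_norm_bounded_eventually_nat (summable_abs_genBinom_mul_pow r (norm_nonneg x) hx) ?_
  filter_upwards [Filter.eventually_gt_atTop 0] with k hk
  rw [norm_norm, norm_smul, Real.norm_eq_abs]
  exact mul_le_mul_of_nonneg_left (norm_pow_le' x hk) (abs_nonneg _)

lemma abs_sub_one_le_norm_of_mem_spectrum_one_add {𝔸 : Type*} [NormedRing 𝔸] [NormedAlgebra ℝ 𝔸]
    [CompleteSpace 𝔸] [NormOneClass 𝔸] {a : 𝔸} {x : ℝ} (hx : x ∈ spectrum ℝ (1 + a)) :
    |x - 1| ≤ ‖a‖ := by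
  have hx' : (x - 1) + 1 ∈ spectrum ℝ (1 + a) := by rwa [sub_add_cancel]
  rw [spectrum.add_mem_iff, map_one, neg_add_cancel_left] at hx'
  exact spectrum.norm_le_norm_of_mem hx'

namespace Matrix

variable {n : Type*} [Fintype n] [DecidableEq n]

lemma abs_sub_one_lt_of_mem_spectrum_one_add {X : Matrix n n ℂ} (hX : ‖X‖ < 1) {x : ℝ}
    (hx : x ∈ spectrum ℝ (1 + X)) : |x - 1| < 1 := by
  cases isEmpty_or_nonempty n
  -- for empty `n` the norm of `1` is `0`, but the matrix algebra is trivial and has empty spectrum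
  · simp [spectrum.of_subsingleton] at hx
  · exact (abs_sub_one_le_norm_of_mem_spectrum_one_add hx).trans_lt hX

lemma IsHermitian.hasSum_cfc {𝕜 ι : Type*} [RCLike 𝕜] {A : Matrix n n 𝕜} (hA : A.IsHermitian)
    {g : ι → ℝ → ℝ} {f : ℝ → ℝ} (h : ∀ x ∈ spectrum ℝ A, HasSum (fun i => g i x) (f x)) :
    HasSum (fun i => cfc (g i) A) (cfc f A) := by
  simp only [hA.cfc_eq, IsHermitian.cfc, Unitary.conjStarAlgAut_apply]
  have hdiag : HasSum (fun i => diagonal (RCLike.ofReal ∘ g i ∘ hA.eigenvalues))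
      (diagonal (RCLike.ofReal ∘ f ∘ hA.eigenvalues) : Matrix n n 𝕜) :=
    .matrix_diagonal <| Pi.hasSum.mpr fun j =>
      (RCLike.hasSum_ofReal 𝕜).mpr (h _ (hA.eigenvalues_mem_spectrum_real j))
  exact (hdiag.mul_left _).mul_right _

lemma matRpow_eq_cfc (r : ℝ) {A : Matrix n n ℂ} (hA : A.IsHermitian) :
    matRpow r A = cfc (fun t : ℝ => t ^ r) A := by
  rw [matRpow, dif_pos hA, hA.cfc_eq, IsHermitian.cfc, Unitary.conjStarAlgAut_apply]
  rfl

end Matrix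

/-- Generalized binomial theorem for matrix powers: for `‖X‖ < 1` (operator norm)
the series `∑ C(r,k) X^k` converges absolutely, and if `I + X` is positive definite
its sum is `(I + X)^r` given by the spectral functional calculus. -/
theorem binomial_series (r : ℝ) {n : Type*} [Fintype n] [DecidableEq n]
    (X : Matrix n n ℂ) (hX : ‖X‖ < 1) :
    Summable (fun k : ℕ => ‖genBinom r k • X ^ k‖) ∧
    ((1 + X).PosDef → ∑' k : ℕ, genBinom r k • X ^ k = matRpow r (1 + X)) := by
  refine ⟨summable_norm_genBinom_smul_pow r hX, fun hpd => ?_⟩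
  have hS : (1 + X).IsHermitian := hpd.isHermitian
  have hX_cfc : cfc (fun t : ℝ => t - 1) (1 + X) = X := by
    rw [cfc_sub _ _ _, cfc_id' ℝ (1 + X) hS.isSelfAdjoint, cfc_const_one ℝ (1 + X),
      add_sub_cancel_left]
  have hterm (k : ℕ) :
      genBinom r k • X ^ k = cfc (fun t : ℝ => genBinom r k * (t - 1) ^ k) (1 + X) := by
    rw [cfc_const_mul (genBinom r k) (fun t : ℝ => (t - 1) ^ k) (1 + X), cfc_pow _ _ _, hX_cfc]
  simp_rw [hterm, matRpow_eq_cfc r hS]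
  refine (hS.hasSum_cfc fun x hx => ?_).tsum_eq
  simpa using hasSum_genBinom_mul_pow r (abs_sub_one_lt_of_mem_spectrum_one_add hX hx)
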